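/- For all real a > 0 and real w with |w| ≥ a^(1+δ) for some fixed δ ∈ (0,1), and for a sufficiently large, there exist constants β₁ > β₂ > 0 such that −β₁|w| ≤ Re F_a(iw) ≤ −β₂|w|, where F_a(z) = log Γ(z + a) − log Γ(a) − z log a + z/(2a). -/

import Mathlib

/-!
By Gauss's product for `Γ`, `Re F_a(iw) = log (|Γ(a + iw)| / Γ(a)) = -½ ∑ⱼ log (1 + w² / (a + j)²)`.
The summand is decreasing in `j`, so the sum lies between
`∫_a^∞ log (1 + w²/t²) dt = π|w| - a log (1 + w²/a²) - 2|w| arctan (a/|w|)` and this integral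
plus the first term, which is at most `2|w|/a`. As `arctan y ≤ y`, the integral falls short of
`π|w|` by at most `a (log (1 + w²/a²) + 2)`, and this is below `|w|/2` once `|w| ≥ a^(1+δ)`,
because then `|w|/a ≥ a^δ` is large.
-/

/-- `F_a(z) = log Γ(z + a) − log Γ(a) − z log a + z/(2a)`. -/
noncomputable def Fgamma (a : ℝ) (z : ℂ) : ℂ :=
  Complex.log (Complex.Gamma (z + (a : ℂ))) - Complex.log (Complex.Gamma (a : ℂ))
    - z * Complex.log (a : ℂ) + z / (2 * (a : ℂ))

open Real Filter Finset Topology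

lemma re_Fgamma_ofReal_mul_I {a : ℝ} (ha : 0 < a) (w : ℝ) :
    (Fgamma a (w * Complex.I)).re = log ‖Complex.Gamma (a + w * Complex.I)‖ - log (Gamma a) := by
  have hlog : Complex.log a = (log a : ℂ) := (Complex.ofReal_log ha.le).symm
  simp [Fgamma, add_comm _ (a : ℂ), hlog, Complex.log_re, Complex.div_re, Complex.Gamma_ofReal,
    Complex.norm_real, Real.log_abs]

lemma log_div_norm_add_mul_I {t : ℝ} (ht : 0 < t) (w : ℝ) :
    log (t / ‖(t : ℂ) + w * Complex.I‖) = -(1 / 2) * log (1 + w ^ 2 / t ^ 2) := by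
  have hpos : 0 < t ^ 2 + w ^ 2 := by positivity
  rw [Complex.norm_add_mul_I, log_div ht.ne' (by positivity), log_sqrt hpos.le,
    show 1 + w ^ 2 / t ^ 2 = (t ^ 2 + w ^ 2) / t ^ 2 by field_simp,
    log_div hpos.ne' (by positivity), log_pow]
  push_cast
  ring

lemma log_norm_GammaSeq_div_GammaSeq {a : ℝ} (ha : 0 < a) (w : ℝ) {n : ℕ} (hn : n ≠ 0) :
    log (‖Complex.GammaSeq (a + w * Complex.I) n‖ / Real.GammaSeq a n)
      = -(1 / 2) * ∑ j ∈ range (n + 1), log (1 + w ^ 2 / (a + j) ^ 2) := by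
  have hj : ∀ j : ℕ, 0 < a + j := fun j => by positivity
  have hnorm : ∀ j : ℕ, ‖((a + j : ℝ) : ℂ) + w * Complex.I‖ ≠ 0 := fun j => by
    rw [Complex.norm_add_mul_I]; have := hj j; positivity
  have hseq : ‖Complex.GammaSeq (a + w * Complex.I) n‖ / Real.GammaSeq a n
      = ∏ j ∈ range (n + 1), (a + j) / ‖((a + j : ℝ) : ℂ) + w * Complex.I‖ := by
    have hcpow : ‖(n : ℂ) ^ ((a : ℂ) + w * Complex.I)‖ = (n : ℝ) ^ a := by
      rw [← Complex.ofReal_natCast, Complex.norm_cpow_eq_rpow_re_of_pos (by positivity)]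
      simp
    have hfac : (0 : ℝ) < (n : ℝ) ^ a * n.factorial := by
      have : (0 : ℝ) < n := by positivity
      positivity
    rw [Complex.GammaSeq, Real.GammaSeq, norm_div, norm_mul, norm_prod, hcpow,
      Complex.norm_natCast, prod_div_distrib, div_div_div_comm, div_self hfac.ne', one_div,
      inv_div]
    congr 1
    refine prod_congr rfl fun j _ => ?_
    push_cast
    ring_nf
  rw [hseq, log_prod fun j _ => div_ne_zero (hj j).ne' (hnorm j), mul_sum]
  exact sum_congr rfl fun j _ => log_div_norm_add_mul_I (hj j) w

lemma tendsto_re_Fgamma {a : ℝ} (ha : 0 < a) (w : ℝ) :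
    Tendsto (fun n : ℕ => -(1 / 2) * ∑ j ∈ range (n + 1), log (1 + w ^ 2 / (a + j) ^ 2))
      atTop (𝓝 (Fgamma a (w * Complex.I)).re) := by
  have hΓz : ‖Complex.Gamma (a + w * Complex.I)‖ ≠ 0 :=
    norm_ne_zero_iff.2 (Complex.Gamma_ne_zero_of_re_pos (by simpa using ha))
  have hΓa : Gamma a ≠ 0 := (Gamma_pos_of_pos ha).ne'
  have hlim := ((continuous_norm.tendsto _).comp
    (Complex.GammaSeq_tendsto_Gamma (a + w * Complex.I))).div (Real.GammaSeq_tendsto_Gamma a) hΓa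
  rw [re_Fgamma_ofReal_mul_I ha, ← log_div hΓz hΓa]
  refine ((continuousAt_log (div_ne_zero hΓz hΓa)).tendsto.comp hlim).congr' ?_
  filter_upwards [eventually_ne_atTop 0] with n hn
  exact log_norm_GammaSeq_div_GammaSeq ha w hn

lemma integral_log_one_add_sq_div {v a T : ℝ} (hv : 0 < v) (ha : 0 < a) (haT : a ≤ T) :
    ∫ t in a..T, log (1 + v ^ 2 / t ^ 2)
      = (T * log (1 + v ^ 2 / T ^ 2) + 2 * v * arctan (T / v))
        - (a * log (1 + v ^ 2 / a ^ 2) + 2 * v * arctan (a / v)) := by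
  have hpos : ∀ t ∈ Set.uIcc a T, 0 < t := by
    rw [Set.uIcc_of_le haT]; exact fun t ht => ha.trans_le ht.1
  have hcont : ContinuousOn (fun t => log (1 + v ^ 2 / t ^ 2)) (Set.uIcc a T) :=
    ContinuousOn.log (by fun_prop (disch := exact fun t ht => pow_ne_zero 2 (hpos t ht).ne'))
      fun t ht => (by have := hpos t ht; positivity)
  refine intervalIntegral.integral_eq_sub_of_hasDerivAt
    (f := fun t => t * log (1 + v ^ 2 / t ^ 2) + 2 * v * arctan (t / v)) (fun t ht => ?_)
    hcont.intervalIntegrable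
  have ht := hpos t ht
  have hsq : HasDerivAt (fun y => 1 + v ^ 2 / y ^ 2) (-2 * v ^ 2 / t ^ 3) t :=
    (((hasDerivAt_const t (v ^ 2)).div (hasDerivAt_pow 2 t) (by positivity)).const_add
      1).congr_deriv (by field_simp; ring)
  have harctan := ((hasDerivAt_arctan (t / v)).comp t ((hasDerivAt_id' t).div_const v)).const_mul
    (2 * v)
  refine (((hasDerivAt_id' t).mul (hsq.log (by positivity))).add harctan).congr_deriv ?_
  field_simp
  ring

lemma arctan_le_self {x : ℝ} (hx : 0 ≤ x) : arctan x ≤ x := by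
  rcases le_or_gt (π / 2) x with h | h
  · exact (arctan_lt_pi_div_two x).le.trans h
  · calc arctan x ≤ arctan (tan x) := arctan_strictMono.monotone (le_tan hx h)
      _ = x := arctan_tan (by linarith [pi_pos]) h

lemma log_one_add_sq_le {x : ℝ} (hx : 0 ≤ x) : log (1 + x ^ 2) ≤ 2 * x :=
  calc log (1 + x ^ 2) ≤ log ((1 + x) ^ 2) := log_le_log (by positivity) (by nlinarith)
    _ = 2 * log (1 + x) := by rw [log_pow]; norm_num
    _ ≤ 2 * x := by linarith [log_le_sub_one_of_pos (by positivity : 0 < 1 + x)]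

lemma log_one_add_sq_div_le {v t : ℝ} (hv : 0 ≤ v) (ht : 0 < t) :
    log (1 + v ^ 2 / t ^ 2) ≤ 2 * (v / t) := by
  rw [← div_pow]; exact log_one_add_sq_le (by positivity)

lemma intervalIntegral_log_one_add_sq_div_le {v a T : ℝ} (hv : 0 < v) (ha : 0 < a) (haT : a ≤ T) :
    ∫ t in a..T, log (1 + v ^ 2 / t ^ 2) ≤ (2 + π) * v := by
  have hT : 0 < T := ha.trans_le haT
  have hTlog : T * log (1 + v ^ 2 / T ^ 2) ≤ 2 * v := by
    calc T * log (1 + v ^ 2 / T ^ 2) ≤ T * (2 * (v / T)) :=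
          mul_le_mul_of_nonneg_left (log_one_add_sq_div_le hv.le hT) hT.le
      _ = 2 * v := by field_simp
  have halog : 0 ≤ a * log (1 + v ^ 2 / a ^ 2) :=
    mul_nonneg ha.le (log_nonneg (by linarith [div_nonneg (sq_nonneg v) (sq_nonneg a)]))
  have hTarctan : 2 * v * arctan (T / v) ≤ 2 * v * (π / 2) :=
    mul_le_mul_of_nonneg_left (arctan_lt_pi_div_two (T / v)).le (by positivity)
  have haarctan : 0 ≤ 2 * v * arctan (a / v) := by
    have := arctan_nonneg.2 (by positivity : 0 ≤ a / v); positivity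
  rw [integral_log_one_add_sq_div hv ha haT]
  nlinarith

lemma le_intervalIntegral_log_one_add_sq_div {v a T : ℝ} (hv : 0 < v) (ha : 0 < a) (haT : a ≤ T)
    (hvT : 4 * v ≤ T) :
    (π - 1 / 2) * v - a * (log (1 + v ^ 2 / a ^ 2) + 2) ≤ ∫ t in a..T, log (1 + v ^ 2 / t ^ 2) := by
  have hT : 0 < T := ha.trans_le haT
  have hTlog : 0 ≤ T * log (1 + v ^ 2 / T ^ 2) :=
    mul_nonneg hT.le (log_nonneg (by linarith [div_nonneg (sq_nonneg v) (sq_nonneg T)]))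
  have hTarctan : π / 2 - 1 / 4 ≤ arctan (T / v) := by
    have hcompl := arctan_inv_of_pos (by positivity : 0 < T / v)
    rw [inv_div] at hcompl
    have : v / T ≤ 1 / 4 := by rw [div_le_div_iff₀ hT (by norm_num)]; linarith
    linarith [arctan_le_self (by positivity : 0 ≤ v / T)]
  have haarctan : 2 * v * arctan (a / v) ≤ 2 * a := by
    calc 2 * v * arctan (a / v) ≤ 2 * v * (a / v) :=
          mul_le_mul_of_nonneg_left (arctan_le_self (by positivity)) (by positivity)
      _ = 2 * a := by field_simp
  rw [integral_log_one_add_sq_div hv ha haT]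
  nlinarith

lemma antitoneOn_log_one_add_sq_div (v : ℝ) {a b : ℝ} (ha : 0 < a) :
    AntitoneOn (fun t => log (1 + v ^ 2 / t ^ 2)) (Set.Icc a b) := by
  intro x hx y hy hxy
  have hx0 : 0 < x := ha.trans_le hx.1
  apply log_le_log (by positivity)
  gcongr

lemma sum_log_one_add_sq_div_le {v a : ℝ} (hv : 0 < v) (ha : 0 < a) (n : ℕ) :
    ∑ j ∈ range (n + 1), log (1 + v ^ 2 / (a + j) ^ 2) ≤ 2 * (v / a) + (2 + π) * v := by
  rw [sum_range_succ']
  have hsum := (antitoneOn_log_one_add_sq_div v ha (b := a + n)).sum_le_integral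
  have hint := intervalIntegral_log_one_add_sq_div_le hv ha (le_add_of_nonneg_right n.cast_nonneg)
  have hfirst := log_one_add_sq_div_le hv.le ha
  push_cast at hsum ⊢
  rw [add_zero]
  linarith

lemma le_sum_log_one_add_sq_div {v a : ℝ} (hv : 0 < v) (ha : 0 < a) {n : ℕ} (hn : 4 * v ≤ n) :
    (π - 1 / 2) * v - a * (log (1 + v ^ 2 / a ^ 2) + 2)
      ≤ ∑ j ∈ range (n + 1), log (1 + v ^ 2 / (a + j) ^ 2) := by
  have hsum := (antitoneOn_log_one_add_sq_div v ha (b := a + (n + 1 : ℕ))).integral_le_sum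
  have hint := le_intervalIntegral_log_one_add_sq_div hv ha
    (le_add_of_nonneg_right (n + 1).cast_nonneg) (by push_cast; linarith)
  linarith

lemma log_one_add_sq_add_two_le {x : ℝ} (hx : 99 ≤ x) : log (1 + x ^ 2) + 2 ≤ x / 2 := by
  set s := √(1 + x)
  have hs2 : s ^ 2 = 1 + x := sq_sqrt (by linarith)
  have hs10 : 10 ≤ s := by nlinarith [sqrt_nonneg (1 + x)]
  calc log (1 + x ^ 2) + 2 ≤ log (s ^ 4) + 2 := by
        gcongr 1
        exact log_le_log (by positivity) (by nlinarith)
    _ = 4 * log s + 2 := by rw [log_pow]; norm_num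
    _ ≤ 4 * (s - 1) + 2 := by linarith [log_le_sub_one_of_pos (by linarith : 0 < s)]
    _ ≤ x / 2 := by nlinarith

lemma mul_log_one_add_sq_div_add_two_le {δ a v : ℝ} (hδ : 0 < δ) (ha : 99 ^ δ⁻¹ ≤ a)
    (hv : a ^ (1 + δ) ≤ v) : a * (log (1 + v ^ 2 / a ^ 2) + 2) ≤ v / 2 := by
  have ha0 : 0 < a := (rpow_pos_of_pos (by norm_num) _).trans_le ha
  have hx : 99 ≤ v / a := by
    rw [le_div_iff₀ ha0]
    calc 99 * a = (99 ^ δ⁻¹) ^ δ * a := by rw [rpow_inv_rpow (by norm_num) hδ.ne']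
      _ ≤ a ^ δ * a := by gcongr
      _ = a ^ (1 + δ) := by rw [rpow_add ha0, rpow_one, mul_comm]
      _ ≤ v := hv
  calc a * (log (1 + v ^ 2 / a ^ 2) + 2) = a * (log (1 + (v / a) ^ 2) + 2) := by rw [div_pow]
    _ ≤ a * (v / a / 2) := by gcongr; exact log_one_add_sq_add_two_le hx
    _ = v / 2 := by field_simp

theorem re_F_linear_bounds (δ : ℝ) (hδ : δ ∈ Set.Ioo (0 : ℝ) 1) :
    ∃ β₁ > (0 : ℝ), ∃ β₂ > (0 : ℝ), β₂ < β₁ ∧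
      ∃ A : ℝ, ∀ a : ℝ, A ≤ a → ∀ w : ℝ, a ^ (1 + δ) ≤ |w| →
        -β₁ * |w| ≤ (Fgamma a ((w : ℂ) * Complex.I)).re ∧
        (Fgamma a ((w : ℂ) * Complex.I)).re ≤ -β₂ * |w| := by
  refine ⟨2 + π / 2, by positivity, 1, one_pos, by linarith [pi_gt_three], 99 ^ δ⁻¹,
    fun a ha w hw => ?_⟩
  have ha1 : 1 ≤ a := (one_le_rpow (by norm_num) (inv_nonneg.2 hδ.1.le)).trans ha
  have ha0 : 0 < a := by linarith
  have hw0 : 0 < |w| := (rpow_pos_of_pos ha0 _).trans_le hw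
  have hlim := tendsto_re_Fgamma ha0 w
  simp only [← sq_abs w] at hlim
  constructor
  · refine ge_of_tendsto hlim (Eventually.of_forall fun n => ?_)
    have hsum := sum_log_one_add_sq_div_le hw0 ha0 n
    have : |w| / a ≤ |w| := div_le_self hw0.le ha1
    linarith
  · refine le_of_tendsto hlim ?_
    filter_upwards [eventually_ge_atTop ⌈4 * |w|⌉₊] with n hn
    have hsum := le_sum_log_one_add_sq_div hw0 ha0 (Nat.ceil_le.1 hn)
    have hsmall := mul_log_one_add_sq_div_add_two_le hδ.1 ha hw
    linarith [mul_le_mul_of_nonneg_right pi_gt_three.le hw0.le]
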